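/- Let s be a Hermitian involution and A₀, A₁ operators, M₁ = (I+s)/2, M₀ = (I−s)/2. If (A₁M₁ + A₀M₀)ρ = ρ, s commutes with A₀ and A₁, and ρ is positive semidefinite, then A₁(M₁ρM₁) = M₁ρM₁ and A₀(M₀ρM₀) = M₀ρM₀, and moreover s(M₁ρM₁) = M₁ρM₁ and s(M₀ρM₀) = −M₀ρM₀. -/
import Mathlib


open Matrix ComplexOrder

/-- Soundness of the Condition rule: if `(A₁M₁ + A₀M₀)ρ = ρ` with `s` a Hermitian
involution commuting with `A₀` and `A₁`, and `ρ` positive semidefinite, then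
`A₁` fixes `M₁ρM₁`, `A₀` fixes `M₀ρM₀`, `s` fixes `M₁ρM₁`, and `s(M₀ρM₀) = −M₀ρM₀`. -/
theorem condition_rule_soundness {m : ℕ}
    (s A₀ A₁ ρ : Matrix (Fin m) (Fin m) ℂ) (hρ : ρ.PosSemidef)
    (hs : s.IsHermitian) (hs2 : s * s = 1)
    (hc₀ : s * A₀ = A₀ * s) (hc₁ : s * A₁ = A₁ * s) :
    let M₁ : Matrix (Fin m) (Fin m) ℂ := (2 : ℂ)⁻¹ • (1 + s)
    let M₀ : Matrix (Fin m) (Fin m) ℂ := (2 : ℂ)⁻¹ • (1 - s)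
    (A₁ * M₁ + A₀ * M₀) * ρ = ρ →
      A₁ * (M₁ * ρ * M₁) = M₁ * ρ * M₁ ∧
      A₀ * (M₀ * ρ * M₀) = M₀ * ρ * M₀ ∧
      s * (M₁ * ρ * M₁) = M₁ * ρ * M₁ ∧
      s * (M₀ * ρ * M₀) = -(M₀ * ρ * M₀) := by
  intro M₁ M₀ h
  have h2 : (2 : ℂ) ≠ 0 := two_ne_zero
  have hsM1 : s * M₁ = M₁ := by
    simp only [M₁, Matrix.mul_smul, mul_add, mul_one, hs2]
    rw [add_comm]
  have hM1s : M₁ * s = M₁ := by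
    simp only [M₁, Matrix.smul_mul, add_mul, one_mul, hs2]
    rw [add_comm]
  have hsM0 : s * M₀ = -M₀ := by
    simp only [M₀, Matrix.mul_smul, mul_sub, mul_one, hs2, ← smul_neg, neg_sub]
  have hM0s : M₀ * s = -M₀ := by
    simp only [M₀, Matrix.smul_mul, sub_mul, one_mul, hs2, ← smul_neg, neg_sub]
  have hM1A1 : M₁ * A₁ = A₁ * M₁ := by
    simp only [M₁, Matrix.smul_mul, Matrix.mul_smul, add_mul, mul_add, one_mul, mul_one, hc₁]
  have hM1A0 : M₁ * A₀ = A₀ * M₁ := by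
    simp only [M₁, Matrix.smul_mul, Matrix.mul_smul, add_mul, mul_add, one_mul, mul_one, hc₀]
  have hM0A1 : M₀ * A₁ = A₁ * M₀ := by
    simp only [M₀, Matrix.smul_mul, Matrix.mul_smul, sub_mul, mul_sub, one_mul, mul_one, hc₁]
  have hM0A0 : M₀ * A₀ = A₀ * M₀ := by
    simp only [M₀, Matrix.smul_mul, Matrix.mul_smul, sub_mul, mul_sub, one_mul, mul_one, hc₀]
  have hM1M1 : M₁ * M₁ = M₁ := by
    simp only [M₁, Matrix.smul_mul, Matrix.mul_smul, add_mul, mul_add, one_mul, mul_one, hs2]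
    module
  have hM0M0 : M₀ * M₀ = M₀ := by
    simp only [M₀, Matrix.smul_mul, Matrix.mul_smul, sub_mul, mul_sub, one_mul, mul_one, hs2]
    module
  have hM1M0 : M₁ * M₀ = 0 := by
    simp only [M₁, M₀, Matrix.smul_mul, Matrix.mul_smul, add_mul, mul_sub, one_mul, mul_one, hs2]
    module
  have hM0M1 : M₀ * M₁ = 0 := by
    simp only [M₁, M₀, Matrix.smul_mul, Matrix.mul_smul, sub_mul, mul_add, one_mul, mul_one, hs2]
    module
  have key1 : M₁ * (A₁ * M₁ + A₀ * M₀) = A₁ * M₁ := by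
    rw [mul_add, ← mul_assoc, ← mul_assoc, hM1A1, hM1A0, mul_assoc A₁, hM1M1, mul_assoc A₀,
      hM1M0, mul_zero, add_zero]
  have key0 : M₀ * (A₁ * M₁ + A₀ * M₀) = A₀ * M₀ := by
    rw [mul_add, ← mul_assoc, ← mul_assoc, hM0A1, hM0A0, mul_assoc A₁, hM0M1, mul_zero,
      zero_add, mul_assoc A₀, hM0M0]
  have h1 : A₁ * (M₁ * ρ) = M₁ * ρ := by
    have := congrArg (fun X => M₁ * X) h
    rw [← mul_assoc, key1, mul_assoc] at this
    exact this
  have h0 : A₀ * (M₀ * ρ) = M₀ * ρ := by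
    have := congrArg (fun X => M₀ * X) h
    rw [← mul_assoc, key0, mul_assoc] at this
    exact this
  refine ⟨?_, ?_, ?_, ?_⟩
  · rw [← mul_assoc, ← mul_assoc, mul_assoc A₁, h1]
  · rw [← mul_assoc, ← mul_assoc, mul_assoc A₀, h0]
  · rw [← mul_assoc, ← mul_assoc, hsM1]
  · rw [← mul_assoc, ← mul_assoc, hsM0, neg_mul, neg_mul]
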